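/- arXiv:2310.03032 — 5 statements merged into one kernel-verified Lean document; each statement's English description precedes it below -/
import Mathlib

section
/- If L is an odd positive integer, the geometric series S(x) = \sum_{l=0}^{L} x^l is monotonically increasing on the interval (-\infty, 0]. -/
/-! The derivative `S'(x) = ∑_{i<L} (i+1) xⁱ` satisfies
`(x - 1)² S'(x) = L x^(L+1) - (L+1) x^L + 1`. For `x ≤ 0` and odd `L` the power `x^(L+1)` is
nonnegative and `x^L` is nonpositive, so the right-hand side is at least `1` and `S' > 0`. -/

open Finset

theorem hasDerivAt_geom_sum {𝕜 : Type*} [NontriviallyNormedField 𝕜] (n : ℕ) (x : 𝕜) :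
    HasDerivAt (fun y : 𝕜 => ∑ i ∈ range (n + 1), y ^ i)
      (∑ i ∈ range n, ((i : 𝕜) + 1) * x ^ i) x := by
  have h := HasDerivAt.fun_sum (u := range (n + 1)) fun i _ => hasDerivAt_pow i x
  rw [sum_range_succ'] at h
  simpa using h

theorem sub_one_sq_mul_sum_succ_mul_pow {R : Type*} [CommRing R] (n : ℕ) (x : R) :
    (x - 1) ^ 2 * ∑ i ∈ range n, ((i : R) + 1) * x ^ i
      = n * x ^ (n + 1) - (n + 1) * x ^ n + 1 := by
  induction n with
  | zero => simp
  | succ n ih =>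
    rw [sum_range_succ, mul_add, ih]
    push_cast
    ring

theorem Odd.sum_succ_mul_pow_pos {R : Type*} [CommRing R] [LinearOrder R] [IsStrictOrderedRing R]
    {n : ℕ} (hn : Odd n) {x : R} (hx : x ≤ 0) :
    0 < ∑ i ∈ range n, ((i : R) + 1) * x ^ i := by
  have heven : 0 ≤ (n : R) * x ^ (n + 1) := mul_nonneg n.cast_nonneg (hn.add_one.pow_nonneg x)
  have hodd : ((n : R) + 1) * x ^ n ≤ 0 :=
    mul_nonpos_of_nonneg_of_nonpos (by positivity) (hn.pow_nonpos hx)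
  have hrhs : 0 < (x - 1) ^ 2 * ∑ i ∈ range n, ((i : R) + 1) * x ^ i := by
    rw [sub_one_sq_mul_sum_succ_mul_pow]
    linarith
  exact pos_of_mul_pos_right hrhs (sq_nonneg _)

theorem stmt_0_general (L : ℕ) (hL : Odd L) :
    StrictMonoOn (fun x : ℝ => ∑ l ∈ Finset.range (L + 1), x ^ l) (Set.Iic 0) := by
  refine strictMonoOn_of_deriv_pos (convex_Iic 0) (by fun_prop) fun x hx => ?_
  rw [interior_Iic] at hx
  rw [(hasDerivAt_geom_sum L x).deriv]
  exact hL.sum_succ_mul_pow_pos hx.le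

/-- If `L` is an odd positive integer, the geometric series
`S(x) = ∑_{l=0}^{L} x^l` is monotonically increasing on `(-∞, 0]`. -/
theorem stmt_0 (L : ℕ) (hL : Odd L) (hL1 : 1 ≤ L) :
    StrictMonoOn (fun x : ℝ => ∑ l ∈ Finset.range (L + 1), x ^ l) (Set.Iic 0) :=
  stmt_0_general L hL
end

section
/- Let \tilde{A} be a real symmetric n\times n matrix whose eigenvalues all lie in [-1,1], let \beta \in [0,1) and L \ge 0, and set P = (1-\beta)\sum_{l=0}^{L} \beta^l \tilde{A}^l. Then every eigenvalue \tilde{\lambda} of P satisfies \tilde{\lambda} \ge \frac{1-\beta}{1+\beta}(1 - \beta^{L}). -/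
lemma scalar_bound (β x : ℝ) (hβ0 : 0 ≤ β) (hβ1 : β < 1)
    (hx : x ∈ Set.Icc (-1 : ℝ) 1) (L : ℕ) :
    (1 - β) / (1 + β) * (1 - β ^ L) ≤
      (1 - β) * ∑ l ∈ Finset.range (L + 1), β ^ l * x ^ l := by
  obtain ⟨hx1, hx2⟩ := hx
  set t := β * x with ht
  have habs : |t| ≤ β := by
    rw [abs_mul, abs_of_nonneg hβ0]
    calc β * |x| ≤ β * 1 := by
          exact mul_le_mul_of_nonneg_left (abs_le.mpr ⟨hx1, hx2⟩) hβ0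
      _ = β := mul_one β
  have ht1 : t < 1 := lt_of_le_of_lt (le_trans (le_abs_self t) habs) hβ1
  have ht2 : -β ≤ t := by
    have := neg_abs_le t; linarith [abs_le.mp habs]
  have hsum : ∑ l ∈ Finset.range (L + 1), β ^ l * x ^ l
      = ∑ l ∈ Finset.range (L + 1), t ^ l := by
    refine Finset.sum_congr rfl fun l _ => ?_
    rw [ht, mul_pow]
  rw [hsum]
  have hgeom : (∑ l ∈ Finset.range (L + 1), t ^ l) * (1 - t) = 1 - t ^ (L + 1) := by
    have := geom_sum_mul t (L + 1)
    nlinarith [this]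
  have htpow : t ^ (L + 1) ≤ β ^ L := by
    calc t ^ (L + 1) ≤ |t ^ (L + 1)| := le_abs_self _
      _ = |t| ^ (L + 1) := abs_pow t (L + 1)
      _ ≤ β ^ (L + 1) := pow_le_pow_left₀ (abs_nonneg t) habs _
      _ ≤ β ^ L := pow_le_pow_of_le_one hβ0 hβ1.le (Nat.le_succ L)
  have h1t : 0 < 1 - t := by linarith
  have h1β : 0 < 1 + β := by linarith
  have hβL : β ^ L ≤ 1 := pow_le_one₀ hβ0 hβ1.le
  have hS : (1 - β ^ L) / (1 + β) ≤ ∑ l ∈ Finset.range (L + 1), t ^ l := by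
    rw [div_le_iff₀ h1β]
    have hnum : 1 - β ^ L ≤ (∑ l ∈ Finset.range (L + 1), t ^ l) * (1 - t) := by
      rw [hgeom]; linarith
    have hS0 : 0 ≤ ∑ l ∈ Finset.range (L + 1), t ^ l := by
      by_contra h
      push_neg at h
      nlinarith [mul_pos (neg_pos.mpr h) h1t]
    nlinarith [mul_nonneg hS0 (show (0:ℝ) ≤ (1 + β) - (1 - t) by linarith)]
  have h1mβ : 0 ≤ 1 - β := by linarith
  calc (1 - β) / (1 + β) * (1 - β ^ L) = (1 - β) * ((1 - β ^ L) / (1 + β)) := by ring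
    _ ≤ (1 - β) * ∑ l ∈ Finset.range (L + 1), t ^ l :=
        mul_le_mul_of_nonneg_left hS h1mβ

/-- Every eigenvalue of the truncated Neumann series
`P = (1-β) ∑_{l=0}^{L} β^l Ã^l` of a symmetric matrix `Ã` with spectrum in
`[-1,1]` is at least `(1-β)/(1+β) * (1-β^L)`. -/
theorem stmt_3 {n : ℕ} (A : Matrix (Fin n) (Fin n) ℝ) (hA : A.IsHermitian)
    (hspec : spectrum ℝ A ⊆ Set.Icc (-1 : ℝ) 1)
    (β : ℝ) (hβ0 : 0 ≤ β) (hβ1 : β < 1) (L : ℕ)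
    (P : Matrix (Fin n) (Fin n) ℝ)
    (hP : P = (1 - β) • ∑ l ∈ Finset.range (L + 1), β ^ l • A ^ l) :
    ∀ μ ∈ spectrum ℝ P, (1 - β) / (1 + β) * (1 - β ^ L) ≤ μ := by
  have hsa : IsSelfAdjoint A := hA
  set f : ℝ → ℝ := fun x => (1 - β) * ∑ l ∈ Finset.range (L + 1), β ^ l * x ^ l with hf
  have hPf : P = cfc f A := by
    rw [hP, hf]
    have h1 : cfc (fun x : ℝ => (1 - β) * ∑ l ∈ Finset.range (L + 1), β ^ l * x ^ l) A
        = (1 - β) • cfc (fun x : ℝ => ∑ l ∈ Finset.range (L + 1), β ^ l * x ^ l) A :=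
      cfc_const_mul _ _ A
    have h2 : (fun x : ℝ => ∑ l ∈ Finset.range (L + 1), β ^ l * x ^ l)
        = ∑ l ∈ Finset.range (L + 1), (fun x : ℝ => β ^ l * x ^ l) := by
      ext x; simp
    rw [h1, h2, cfc_sum (fun l => fun x : ℝ => β ^ l * x ^ l) A (Finset.range (L + 1))
      (fun i _ => by fun_prop)]
    congr 1
    refine Finset.sum_congr rfl fun l _ => ?_
    rw [show (fun x : ℝ => β ^ l * x ^ l) = fun x : ℝ => β ^ l * (· ^ l) x from rfl,
      cfc_const_mul _ _ A, cfc_pow_id A l]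
  intro mu hmu
  rw [hPf, cfc_map_spectrum f A] at hmu
  obtain ⟨x, hxA, rfl⟩ := hmu
  exact scalar_bound β x hβ0 hβ1 (hspec hxA) L
end

section
/- Let \tilde{A} be a real symmetric n\times n matrix with spectrum in [-1,1], \beta \in [0,1), L \ge 0, and P = (1-\beta)\sum_{l=0}^{L}\beta^l \tilde{A}^l. Then P is positive definite, i.e., x^T P x > 0 for every nonzero x \in \mathbb{R}^n. -/
/-!
`P` is `f(Ã)` for `f t = (1 - β) ∑_{l ≤ L} (β t)^l`. On the spectrum `β t > -1`, and a geometric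
sum with ratio `> -1` is positive, so `f > 0` on the spectrum of `Ã`. By the spectral mapping
theorem for the continuous functional calculus, `P` is strictly positive, i.e. positive definite.
-/

open Matrix Finset
open scoped MatrixOrder

lemma sum_range_pow_mul_pow_pos {β t : ℝ} (hβ0 : 0 ≤ β) (hβ1 : β < 1) (ht : -1 ≤ t) (L : ℕ) :
    0 < ∑ l ∈ range (L + 1), β ^ l * t ^ l := by
  simp_rw [← mul_pow]
  exact geom_sum_pos' (by nlinarith) L.succ_ne_zero

section

variable {A : Type*} [Ring A] [StarRing A] [Algebra ℝ A] [TopologicalSpace A] [PartialOrder A]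
  [StarOrderedRing A] [ContinuousFunctionalCalculus ℝ A IsSelfAdjoint] [NonnegSpectrumClass ℝ A]

lemma IsSelfAdjoint.isStrictlyPositive_smul_sum_pow {a : A} (ha : IsSelfAdjoint a)
    (hspec : spectrum ℝ a ⊆ Set.Ici (-1)) {β : ℝ} (hβ0 : 0 ≤ β) (hβ1 : β < 1) (L : ℕ) :
    IsStrictlyPositive ((1 - β) • ∑ l ∈ range (L + 1), β ^ l • a ^ l) := by
  have hcfc : (1 - β) • ∑ l ∈ range (L + 1), β ^ l • a ^ l
      = cfc (fun t : ℝ => (1 - β) * ∑ l ∈ range (L + 1), β ^ l * t ^ l) a := by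
    rw [cfc_const_mul .., ← Finset.sum_fn, cfc_sum ..]
    congr 1
    refine Finset.sum_congr rfl fun l _ => ?_
    rw [cfc_const_mul .., cfc_pow_id ..]
  rw [hcfc, cfc_isStrictlyPositive_iff ..]
  intro t ht
  exact mul_pos (sub_pos.mpr hβ1) (sum_range_pow_mul_pow_pos hβ0 hβ1 (hspec ht) L)

end

/-- The truncated Neumann series `P = (1-β) ∑_{l=0}^{L} β^l Ã^l` of a symmetric
matrix with spectrum in `[-1,1]` is positive definite: `xᵀ P x > 0` for `x ≠ 0`. -/
theorem stmt_6 {n : ℕ} (A : Matrix (Fin n) (Fin n) ℝ) (hA : A.IsHermitian)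
    (hspec : spectrum ℝ A ⊆ Set.Icc (-1 : ℝ) 1)
    (β : ℝ) (hβ0 : 0 ≤ β) (hβ1 : β < 1) (L : ℕ)
    (P : Matrix (Fin n) (Fin n) ℝ)
    (hP : P = (1 - β) • ∑ l ∈ Finset.range (L + 1), β ^ l • A ^ l) :
    ∀ x : Fin n → ℝ, x ≠ 0 → 0 < x ⬝ᵥ P.mulVec x := by
  intro x hx
  have hPpos : P.PosDef := by
    rw [hP, ← isStrictlyPositive_iff_posDef]
    exact hA.isSelfAdjoint.isStrictlyPositive_smul_sum_pow
      (hspec.trans Set.Icc_subset_Ici_self) hβ0 hβ1 L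
  simpa using hPpos.dotProduct_mulVec_pos hx
end

section
/- Let \tilde{A} be symmetric with spectrum in [-1,1], \tilde{L} = I - \tilde{A}, \beta \in [0,1), and P = (1-\beta)\sum_{l=0}^{L}\beta^l\tilde{A}^l. Then for every vector x, \langle P x, \tilde{L} P x \rangle \le \langle x, \tilde{L} x \rangle. -/
open Matrix

/-- Structure-awareness: the Neumann-series transformation does not increase the
graph Dirichlet energy: `⟨Px, L̃ Px⟩ ≤ ⟨x, L̃ x⟩` where `L̃ = I - Ã`. -/
theorem stmt_7 {n : ℕ} (A : Matrix (Fin n) (Fin n) ℝ) (hA : A.IsHermitian)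
    (hspec : spectrum ℝ A ⊆ Set.Icc (-1 : ℝ) 1)
    (β : ℝ) (hβ0 : 0 ≤ β) (hβ1 : β < 1) (L : ℕ)
    (P Lap : Matrix (Fin n) (Fin n) ℝ)
    (hP : P = (1 - β) • ∑ l ∈ Finset.range (L + 1), β ^ l • A ^ l)
    (hLap : Lap = 1 - A) :
    ∀ x : Fin n → ℝ,
      (P.mulVec x) ⬝ᵥ Lap.mulVec (P.mulVec x) ≤ x ⬝ᵥ Lap.mulVec x := by
  intro x
  set U : Matrix (Fin n) (Fin n) ℝ := (hA.eigenvectorUnitary : Matrix (Fin n) (Fin n) ℝ) with hU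
  set lam : Fin n → ℝ := hA.eigenvalues with hlam
  have hUU : star U * U = 1 := Unitary.coe_star_mul_self hA.eigenvectorUnitary
  have hUU' : U * star U = 1 := Unitary.coe_mul_star_self hA.eigenvectorUnitary
  have hUT : star U = Uᵀ := by
    rw [Matrix.star_eq_conjTranspose, Matrix.conjTranspose_eq_transpose_of_trivial]
  have hAspec : A = U * diagonal lam * star U := by
    have := hA.spectral_theorem
    simpa using this
  have hlam_mem : ∀ i, lam i ∈ Set.Icc (-1 : ℝ) 1 := fun i =>
    hspec (hA.eigenvalues_mem_spectrum_real i)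
  -- conjugation helpers
  have conj_mul : ∀ d e : Fin n → ℝ,
      (U * diagonal d * star U) * (U * diagonal e * star U)
        = U * diagonal (fun i => d i * e i) * star U := by
    intro d e
    have h : star U * (U * (diagonal e * star U)) = diagonal e * star U := by
      rw [← Matrix.mul_assoc, hUU, Matrix.one_mul]
    simp only [Matrix.mul_assoc]
    rw [h, ← Matrix.mul_assoc (diagonal d), diagonal_mul_diagonal]
  have conj_smul : ∀ (a : ℝ) (d : Fin n → ℝ),
      a • (U * diagonal d * star U) = U * diagonal (fun i => a * d i) * star U := by
    intro a d
    rw [← Matrix.smul_mul, ← Matrix.mul_smul]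
    congr 2
    ext i j
    by_cases h : i = j <;> simp [Matrix.diagonal_apply, h]
  have conj_sum : ∀ (f : ℕ → Fin n → ℝ),
      ∑ l ∈ Finset.range (L + 1), (U * diagonal (f l) * star U)
        = U * diagonal (fun i => ∑ l ∈ Finset.range (L + 1), f l i) * star U := by
    intro f
    rw [← Finset.sum_mul, ← Matrix.mul_sum]
    congr 2
    ext i j
    by_cases h : i = j <;>
      simp [Matrix.diagonal_apply, h, Finset.sum_apply, Matrix.sum_apply]
  -- powers
  have hpow : ∀ l : ℕ, A ^ l = U * diagonal (fun i => lam i ^ l) * star U := by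
    intro l
    induction l with
    | zero => simp [hUU']
    | succ l ih =>
      rw [pow_succ, ih, hAspec, conj_mul]
      have : (fun i => lam i ^ l * lam i) = fun i => lam i ^ (l + 1) := by
        funext i; rw [pow_succ]
      rw [this]
  set p : Fin n → ℝ := fun i => (1 - β) * ∑ l ∈ Finset.range (L + 1), β ^ l * lam i ^ l with hp'
  set q : Fin n → ℝ := fun i => 1 - lam i with hq'
  have hPdiag : P = U * diagonal p * star U := by
    rw [hP]
    calc (1 - β) • ∑ l ∈ Finset.range (L + 1), β ^ l • A ^ l
        = (1 - β) • ∑ l ∈ Finset.range (L + 1),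
            (U * diagonal (fun i => β ^ l * lam i ^ l) * star U) := by
          congr 1
          refine Finset.sum_congr rfl fun l _ => ?_
          rw [hpow l, conj_smul]
      _ = (1 - β) • (U * diagonal
            (fun i => ∑ l ∈ Finset.range (L + 1), β ^ l * lam i ^ l) * star U) := by
          rw [conj_sum]
      _ = U * diagonal p * star U := by rw [conj_smul]
  have hLapdiag : Lap = U * diagonal q * star U := by
    rw [hLap, hAspec]
    have h1 : (1 : Matrix (Fin n) (Fin n) ℝ) = U * diagonal (fun _ => (1:ℝ)) * star U := by
      simp [hUU']
    rw [h1, ← Matrix.sub_mul, ← Matrix.mul_sub, ← Matrix.diagonal_sub]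
  -- quadratic form lemma
  have key : ∀ d : Fin n → ℝ,
      x ⬝ᵥ (U * diagonal d * star U) *ᵥ x = ∑ i, d i * ((star U *ᵥ x) i) ^ 2 := by
    intro d
    rw [← Matrix.mulVec_mulVec, ← Matrix.mulVec_mulVec, Matrix.dotProduct_mulVec,
      ← Matrix.mulVec_transpose, ← hUT]
    simp only [dotProduct, Matrix.mulVec_diagonal]
    exact Finset.sum_congr rfl fun i _ => by ring
  have hPT : Pᵀ = P := by
    rw [hPdiag, Matrix.transpose_mul, Matrix.transpose_mul, ← hUT,
      Matrix.diagonal_transpose, hUT, Matrix.transpose_transpose, ← hUT,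
      Matrix.mul_assoc]
  have hM : Pᵀ * (Lap * P) = U * diagonal (fun i => q i * p i ^ 2) * star U := by
    rw [hPT, hPdiag, hLapdiag, conj_mul, conj_mul]
    have : (fun i => p i * (q i * p i)) = fun i => q i * p i ^ 2 := by
      funext i; ring
    rw [this]
  have hLHS : (P *ᵥ x) ⬝ᵥ Lap *ᵥ (P *ᵥ x)
      = x ⬝ᵥ (U * diagonal (fun i => q i * p i ^ 2) * star U) *ᵥ x := by
    rw [Matrix.mulVec_mulVec, ← Matrix.vecMul_transpose P x, ← Matrix.dotProduct_mulVec,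
      Matrix.mulVec_mulVec, ← Matrix.mul_assoc, Matrix.mul_assoc Pᵀ, hM]
  rw [hLHS, hLapdiag, key, key]
  -- pointwise comparison
  apply Finset.sum_le_sum
  intro i _
  have hli : |lam i| ≤ 1 := abs_le.mpr ⟨(hlam_mem i).1, (hlam_mem i).2⟩
  have hqi : 0 ≤ q i := by
    have := (hlam_mem i).2
    simp only [hq']
    linarith
  have hpi : |p i| ≤ 1 := by
    have habs : |∑ l ∈ Finset.range (L + 1), β ^ l * lam i ^ l|
        ≤ ∑ l ∈ Finset.range (L + 1), β ^ l := by
      refine (Finset.abs_sum_le_sum_abs _ _).trans (Finset.sum_le_sum fun l _ => ?_)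
      rw [abs_mul, abs_pow, abs_pow, abs_of_nonneg hβ0]
      have h1 : |lam i| ^ l ≤ 1 := pow_le_one₀ (abs_nonneg _) hli
      have h2 : 0 ≤ β ^ l := pow_nonneg hβ0 l
      nlinarith
    have hgeom : (1 - β) * ∑ l ∈ Finset.range (L + 1), β ^ l = 1 - β ^ (L + 1) := by
      have := geom_sum_mul β (L + 1)
      nlinarith [this]
    have h1β : 0 ≤ 1 - β := by linarith
    simp only [hp', abs_mul, abs_of_nonneg h1β]
    calc (1 - β) * |∑ l ∈ Finset.range (L + 1), β ^ l * lam i ^ l|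
        ≤ (1 - β) * ∑ l ∈ Finset.range (L + 1), β ^ l :=
          mul_le_mul_of_nonneg_left habs h1β
      _ = 1 - β ^ (L + 1) := hgeom
      _ ≤ 1 := by
          have : 0 ≤ β ^ (L + 1) := pow_nonneg hβ0 _
          linarith
  have hp2 : p i ^ 2 ≤ 1 := by
    have := sq_abs (p i)
    nlinarith [abs_nonneg (p i)]
  have hy2 : 0 ≤ ((star U *ᵥ x) i) ^ 2 := sq_nonneg _
  calc q i * p i ^ 2 * ((star U *ᵥ x) i) ^ 2
      ≤ q i * 1 * ((star U *ᵥ x) i) ^ 2 := by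
        apply mul_le_mul_of_nonneg_right _ hy2
        exact mul_le_mul_of_nonneg_left hp2 hqi
    _ = q i * ((star U *ᵥ x) i) ^ 2 := by ring
end

section
/- Let \tilde{A} be symmetric with spectrum in [-1,1], \beta \in [0,1/2), L \ge 2, and P' = (1-\beta)\sum_{l=0}^{L-1}\beta^l\tilde{A}^l + \beta^L \tilde{A}^L. Then x^T P' x \ge \frac{1 - \beta - \beta^2 - \beta^4}{1+\beta} \|x\|_2^2 for all x, so P' is positive definite. -/
open Matrix

open Finset in
private lemma stmt8_scalar_bound (β t : ℝ) (hβ0 : 0 ≤ β) (hβ : β < 1/2) (L : ℕ) (hL : 2 ≤ L)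
    (ht : |t| ≤ 1) :
    (1 - β - β^2 - β^4)/(1+β) ≤ (1-β) * ∑ l ∈ Finset.range L, β^l * t^l + β^L * t^L := by
  set s := β * t with hs
  have habs : |s| ≤ β := by
    rw [hs, abs_mul, abs_of_nonneg hβ0]; nlinarith [abs_nonneg t]
  have hsle : s ≤ β := le_trans (le_abs_self s) habs
  have hsge : -β ≤ s := neg_le_of_neg_le (le_trans (neg_le_abs s) habs)
  have hβ1 : β ≤ 1 := by linarith
  have hsLabs : |s ^ L| ≤ β ^ 2 := by
    rw [abs_pow]
    calc |s| ^ L ≤ β ^ L := pow_le_pow_left₀ (abs_nonneg s) habs L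
    _ ≤ β ^ 2 := pow_le_pow_of_le_one hβ0 hβ1 hL
  have hsL1 : -(β^2) ≤ s ^ L := by have := neg_abs_le (s ^ L); linarith
  have hsL2 : s ^ L ≤ β^2 := le_trans (le_abs_self _) hsLabs
  have hsum : (1-β) * ∑ l ∈ Finset.range L, β^l * t^l + β^L * t^L
      = (1-β) * ∑ l ∈ Finset.range L, s^l + s^L := by
    simp [hs, mul_pow]
  rw [hsum]
  set f := (1-β) * ∑ l ∈ Finset.range L, s^l + s^L with hf
  have hgeom : (∑ l ∈ Finset.range L, s^l) * (s - 1) = s^L - 1 := geom_sum_mul s L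
  have hkey : f * (1 - s) = (1 - β) + s ^ L * (β - s) := by
    rw [hf]; nlinarith [hgeom]
  set M := 1 - β - β^2 - β^4 with hM
  have hβ2 : β^2 ≤ 1/4 := by nlinarith
  have hβ4 : β^4 ≤ 1/16 := by nlinarith [sq_nonneg (β^2)]
  have hM0 : 0 ≤ M := by nlinarith
  have hN : M ≤ f * (1 - s) := by
    rw [hkey]
    nlinarith [mul_nonneg (mul_nonneg hβ0 hβ0) (sub_nonneg.mpr hsle),
      sq_nonneg (β - β^2), mul_le_mul_of_nonneg_right hsL1 (sub_nonneg.mpr hsle)]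
  have h1β : (0:ℝ) < 1 + β := by linarith
  have h1s : (0:ℝ) < 1 - s := by linarith
  have hc0 : 0 ≤ M / (1 + β) := div_nonneg hM0 (le_of_lt h1β)
  have hcβ : M / (1 + β) * (1 + β) = M := div_mul_cancel₀ M (ne_of_gt h1β)
  have : M / (1 + β) * (1 - s) ≤ f * (1 - s) := by
    calc M / (1 + β) * (1 - s) ≤ M / (1 + β) * (1 + β) :=
          mul_le_mul_of_nonneg_left (by linarith) hc0
    _ = M := hcβ
    _ ≤ f * (1 - s) := hN
  exact le_of_mul_le_mul_right this h1s

private lemma stmt8_conj_pow {n : ℕ} (U B : Matrix (Fin n) (Fin n) ℝ)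
    (h1 : U * star U = 1) (h2 : star U * U = 1) (l : ℕ) :
    (U * B * star U) ^ l = U * B ^ l * star U := by
  induction l with
  | zero => simp [pow_zero, Matrix.mul_one, h1]
  | succ k ih =>
      rw [pow_succ, ih, pow_succ]
      calc U * B ^ k * star U * (U * B * star U)
          = U * B ^ k * (star U * U) * B * star U := by
            simp only [Matrix.mul_assoc]
        _ = U * (B ^ k * B) * star U := by rw [h2]; simp only [Matrix.mul_assoc, Matrix.mul_one]

/-- For `β ∈ [0,1/2)` and `L ≥ 2`, the iterative-approximation matrix
`P' = (1-β) ∑_{l=0}^{L-1} β^l Ã^l + β^L Ã^L` satisfies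
`xᵀ P' x ≥ (1-β-β²-β⁴)/(1+β) ‖x‖²`, hence is positive definite. -/
theorem stmt_8 {n : ℕ} (A : Matrix (Fin n) (Fin n) ℝ) (hA : A.IsHermitian)
    (hspec : spectrum ℝ A ⊆ Set.Icc (-1 : ℝ) 1)
    (β : ℝ) (hβ0 : 0 ≤ β) (hβhalf : β < 1 / 2) (L : ℕ) (hL : 2 ≤ L)
    (P' : Matrix (Fin n) (Fin n) ℝ)
    (hP' : P' = (1 - β) • ∑ l ∈ Finset.range L, β ^ l • A ^ l + β ^ L • A ^ L) :
    (∀ x : Fin n → ℝ,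
        (1 - β - β ^ 2 - β ^ 4) / (1 + β) * (x ⬝ᵥ x) ≤ x ⬝ᵥ P'.mulVec x) ∧
      ∀ x : Fin n → ℝ, x ≠ 0 → 0 < x ⬝ᵥ P'.mulVec x := by
  classical
  set U : Matrix (Fin n) (Fin n) ℝ := (hA.eigenvectorUnitary : Matrix (Fin n) (Fin n) ℝ) with hU
  set μ : Fin n → ℝ := hA.eigenvalues with hμ
  have h1 : U * star U = 1 := by
    exact_mod_cast Matrix.mem_unitaryGroup_iff.mp hA.eigenvectorUnitary.2
  have h2 : star U * U = 1 := by
    exact_mod_cast Matrix.mem_unitaryGroup_iff'.mp hA.eigenvectorUnitary.2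
  have hAeq : A = U * diagonal μ * star U := by
    have := hA.spectral_theorem
    simpa using this
  set c : ℝ := (1 - β - β ^ 2 - β ^ 4) / (1 + β) with hc
  set g : Fin n → ℝ :=
    fun i => (1-β) * ∑ l ∈ Finset.range L, β^l * μ i ^ l + β^L * μ i ^ L with hg
  have hgc : ∀ i, c ≤ g i := by
    intro i
    have hmem : μ i ∈ Set.Icc (-1:ℝ) 1 := hspec (hA.eigenvalues_mem_spectrum_real i)
    have habs : |μ i| ≤ 1 := abs_le.mpr ⟨hmem.1, hmem.2⟩
    exact stmt8_scalar_bound β (μ i) hβ0 hβhalf L hL habs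
  have hPdiag : P' = U * diagonal g * star U := by
    rw [hP', hAeq]
    simp only [stmt8_conj_pow U (diagonal μ) h1 h2, diagonal_pow]
    have hds : ∑ x ∈ Finset.range L, β ^ x • diagonal (μ ^ x)
        = diagonal (fun i => ∑ x ∈ Finset.range L, β ^ x * μ i ^ x) := by
      ext i j
      rcases eq_or_ne i j with rfl | hij
      · simp [Matrix.sum_apply]
      · simp [Matrix.sum_apply, Matrix.diagonal_apply_ne _ hij]
    calc (1 - β) • ∑ x ∈ Finset.range L, β ^ x • (U * diagonal (μ ^ x) * star U)
          + β ^ L • (U * diagonal (μ ^ L) * star U)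
        = U * ((1 - β) • ∑ x ∈ Finset.range L, β ^ x • diagonal (μ ^ x)
            + β ^ L • diagonal (μ ^ L)) * star U := by
          simp only [Matrix.mul_add, Matrix.add_mul, Matrix.mul_sum, Matrix.sum_mul,
            Matrix.mul_smul, Matrix.smul_mul]
      _ = U * diagonal g * star U := by
          rw [hds]
          congr 1
          congr 1
          ext i j
          rcases eq_or_ne i j with rfl | hij
          · simp [hg, Finset.mul_sum]
          · simp [Matrix.diagonal_apply_ne _ hij]
  -- quadratic form computation
  have hform : ∀ x : Fin n → ℝ, x ⬝ᵥ P'.mulVec x = ∑ i, g i * (x ᵥ* U) i ^ 2 := by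
    intro x
    have hstar : star U *ᵥ x = x ᵥ* U := by
      ext j
      simp [Matrix.mulVec, Matrix.vecMul, dotProduct, Matrix.star_apply, mul_comm]
    rw [hPdiag, ← Matrix.mulVec_mulVec, ← Matrix.mulVec_mulVec, hstar,
      Matrix.dotProduct_mulVec x U]
    simp [dotProduct, Matrix.mulVec_diagonal]
    exact Finset.sum_congr rfl fun i _ => by ring
  have hnorm : ∀ x : Fin n → ℝ, x ⬝ᵥ x = ∑ i, (x ᵥ* U) i ^ 2 := by
    intro x
    have hstar : star U *ᵥ x = x ᵥ* U := by
      ext j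
      simp [Matrix.mulVec, Matrix.vecMul, dotProduct, Matrix.star_apply, mul_comm]
    have h3 : x ⬝ᵥ x = (x ᵥ* U) ⬝ᵥ (x ᵥ* U) := by
      have := calc (x ᵥ* U) ⬝ᵥ (x ᵥ* U) = (x ᵥ* U) ⬝ᵥ (star U *ᵥ x) := by rw [hstar]
        _ = ((x ᵥ* U) ᵥ* star U) ⬝ᵥ x := Matrix.dotProduct_mulVec _ _ _
        _ = (x ᵥ* (U * star U)) ⬝ᵥ x := by rw [Matrix.vecMul_vecMul]
        _ = x ⬝ᵥ x := by rw [h1, Matrix.vecMul_one]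
      exact this.symm
    rw [h3]
    simp [dotProduct, pow_two]
  have hmain : ∀ x : Fin n → ℝ, c * (x ⬝ᵥ x) ≤ x ⬝ᵥ P'.mulVec x := by
    intro x
    rw [hform x, hnorm x, Finset.mul_sum]
    exact Finset.sum_le_sum fun i _ =>
      mul_le_mul_of_nonneg_right (hgc i) (sq_nonneg _)
  have hcpos : 0 < c := by
    rw [hc]
    apply div_pos
    · have hβ2 : β^2 ≤ 1/4 := by nlinarith
      have hβ4 : β^4 ≤ 1/16 := by nlinarith [sq_nonneg (β^2)]
      linarith
    · linarith
  refine ⟨hmain, fun x hx => ?_⟩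
  have hxx : 0 < x ⬝ᵥ x := by
    have hnn : 0 ≤ x ⬝ᵥ x := Finset.sum_nonneg fun i _ => mul_self_nonneg (x i)
    rcases lt_or_eq_of_le hnn with h | h
    · exact h
    · exact absurd (dotProduct_self_eq_zero.mp h.symm) hx
  calc (0:ℝ) < c * (x ⬝ᵥ x) := mul_pos hcpos hxx
    _ ≤ x ⬝ᵥ P'.mulVec x := hmain x
end
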